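/- arXiv:1308.1713 — 2 statements merged into one kernel-verified Lean document; each statement's English description precedes it below -/
import Mathlib

section
/- Let μ and ν be probability measures on ℝ^d each satisfying the Poincaré inequality with constants C₁ and C₂ respectively, i.e. μ(f²) ≤ C₁ μ(|∇f|²) + μ(f)² and ν(f²) ≤ C₂ ν(|∇f|²) + ν(f)² for all f ∈ C_b¹(ℝ^d). Then the convolution μ*ν satisfies the Poincaré inequality with constant C₁ + C₂: (μ*ν)(f²) ≤ (C₁+C₂)(μ*ν)(|∇f|²) + ((μ*ν)(f))² for all f ∈ C_b¹(ℝ^d). -/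
open MeasureTheory Real

/-- A probability measure `m` on `ℝ^d` satisfies the Poincaré inequality with constant `C`:
`m(f²) ≤ C·m(|∇f|²) + m(f)²` for all bounded `C¹` functions `f` with bounded gradient. -/
def PoincareIneq {d : ℕ} (m : Measure (EuclideanSpace ℝ (Fin d))) (C : ℝ) : Prop :=
  ∀ f : EuclideanSpace ℝ (Fin d) → ℝ, ContDiff ℝ 1 f →
    (∃ M, ∀ x, |f x| ≤ M) → (∃ M, ∀ x, ‖fderiv ℝ f x‖ ≤ M) →
    ∫ x, f x ^ 2 ∂m ≤ C * ∫ x, ‖fderiv ℝ f x‖ ^ 2 ∂m + (∫ x, f x ∂m) ^ 2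

/-- The convolution `μ * ν` of two measures on `ℝ^d`,
`(μ*ν)(A) = ∫∫ 1_A(x+y) μ(dx) ν(dy)`. -/
noncomputable def conv {d : ℕ} (μ ν : Measure (EuclideanSpace ℝ (Fin d))) :
    Measure (EuclideanSpace ℝ (Fin d)) :=
  (μ.prod ν).map (fun p => p.1 + p.2)

/-! Write `(μ ∗ ν)(h) = μ(x ↦ ν(h(x + ·)))`. The Poincaré inequality of `ν` applied to each
translate `f(x + ·)` bounds `(μ ∗ ν)(f²)` by `C₂ (μ ∗ ν)(|∇f|²) + μ(g²)`, where
`g(x) = ν(f(x + ·))`. The Poincaré inequality of `μ` applied to `g`, together with Jensen's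
inequality `|∇g(x)|² = |ν(∇f(x + ·))|² ≤ ν(|∇f(x + ·)|²)`, bounds `μ(g²)` by
`C₁ (μ ∗ ν)(|∇f|²) + μ(g)²`, and `μ(g) = (μ ∗ ν)(f)`. -/

section BddContinuous

variable {X F : Type*} [TopologicalSpace X] [NormedAddCommGroup F]

structure IsBddContinuous (h : X → F) : Prop where
  continuous : Continuous h
  bdd : ∃ M, ∀ x, ‖h x‖ ≤ M

namespace IsBddContinuous

variable {h : X → F}

lemma norm (hh : IsBddContinuous h) : IsBddContinuous fun x => ‖h x‖ :=
  ⟨hh.continuous.norm, hh.bdd.imp fun _ hM x => by simpa using hM x⟩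

lemma pow {h : X → ℝ} (hh : IsBddContinuous h) (n : ℕ) : IsBddContinuous fun x => h x ^ n := by
  obtain ⟨M, hM⟩ := hh.bdd
  exact ⟨hh.continuous.pow n, M ^ n, fun x => by
    simpa only [norm_pow] using pow_le_pow_left₀ (norm_nonneg _) (hM x) n⟩

lemma integrable [MeasurableSpace X] [OpensMeasurableSpace X] [SecondCountableTopologyEither X F]
    {μ : Measure X} [IsFiniteMeasure μ] (hh : IsBddContinuous h) : Integrable h μ :=
  let ⟨M, hM⟩ := hh.bdd
  .of_bound hh.continuous.aestronglyMeasurable M (.of_forall hM)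

lemma comp_add_left [Add X] [ContinuousAdd X] (hh : IsBddContinuous h) (x : X) :
    IsBddContinuous fun y => h (x + y) :=
  ⟨hh.continuous.comp (continuous_const_add x), hh.bdd.imp fun _ hM y => hM (x + y)⟩

lemma integral_comp_add [NormedSpace ℝ F] [Add X] [ContinuousAdd X] [FirstCountableTopology X]
    [MeasurableSpace X] [OpensMeasurableSpace X] [SecondCountableTopologyEither X F]
    (hh : IsBddContinuous h) (ν : Measure X) [IsFiniteMeasure ν] :
    IsBddContinuous fun x => ∫ y, h (x + y) ∂ν := by
  obtain ⟨M, hM⟩ := hh.bdd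
  refine ⟨continuous_of_dominated (fun x => (hh.comp_add_left x).continuous.aestronglyMeasurable)
    (fun x => .of_forall fun y => hM (x + y)) (integrable_const M) (.of_forall fun y =>
      hh.continuous.comp (continuous_add_const y)), M * ν.real Set.univ, fun x => ?_⟩
  exact norm_integral_le_of_norm_le_const (.of_forall fun y => hM (x + y))

end IsBddContinuous

end BddContinuous

theorem sq_norm_integral_le_integral_sq_norm {α F : Type*} [MeasurableSpace α]
    [NormedAddCommGroup F] [NormedSpace ℝ F] [CompleteSpace F]
    {μ : Measure α} [IsProbabilityMeasure μ] {G : α → F} (hG : Integrable G μ)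
    (hG2 : Integrable (fun a => ‖G a‖ ^ 2) μ) :
    ‖∫ a, G a ∂μ‖ ^ 2 ≤ ∫ a, ‖G a‖ ^ 2 ∂μ :=
  ((convexOn_norm convex_univ).pow (fun _ _ => norm_nonneg _) 2).map_integral_le
    (continuous_norm.pow 2).continuousOn isClosed_univ (.of_forall fun _ => trivial) hG hG2

section BddC1

variable {E : Type*} [NormedAddCommGroup E] [NormedSpace ℝ E]

structure IsBddC1 (f : E → ℝ) : Prop where
  contDiff : ContDiff ℝ 1 f
  bdd : ∃ M, ∀ x, |f x| ≤ M
  bdd_fderiv : ∃ M, ∀ x, ‖fderiv ℝ f x‖ ≤ M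

theorem hasFDerivAt_integral_comp_add {F : Type*} [NormedAddCommGroup F] [NormedSpace ℝ F]
    [MeasurableSpace E] [OpensMeasurableSpace E] [SecondCountableTopology E]
    {ν : Measure E} [IsFiniteMeasure ν] {f : E → F} (hf : ContDiff ℝ 1 f) {x : E}
    (hfi : Integrable (fun y => f (x + y)) ν) {M : ℝ} (hM : ∀ z, ‖fderiv ℝ f z‖ ≤ M) :
    HasFDerivAt (fun x => ∫ y, f (x + y) ∂ν) (∫ y, fderiv ℝ f (x + y) ∂ν) x := by
  have hf' : Continuous (fderiv ℝ f) := hf.continuous_fderiv one_ne_zero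
  refine hasFDerivAt_integral_of_dominated_of_fderiv_le (F := fun x y => f (x + y))
    (F' := fun x y => fderiv ℝ f (x + y)) (bound := fun _ => M) Filter.univ_mem
    (.of_forall fun x' => (hf.continuous.comp (continuous_const_add x')).aestronglyMeasurable)
    hfi (hf'.comp (continuous_const_add x)).aestronglyMeasurable
    (.of_forall fun y _ _ => hM _) (integrable_const M) (.of_forall fun y x' _ => ?_)
  exact (hasFDerivAt_comp_add_right y).2 ((hf.differentiable one_ne_zero _).hasFDerivAt)

namespace IsBddC1

variable {f : E → ℝ}

lemma isBddContinuous (hf : IsBddC1 f) : IsBddContinuous f :=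
  ⟨hf.contDiff.continuous, hf.bdd⟩

lemma isBddContinuous_fderiv (hf : IsBddC1 f) : IsBddContinuous (fderiv ℝ f) :=
  ⟨hf.contDiff.continuous_fderiv one_ne_zero, hf.bdd_fderiv⟩

lemma comp_add_left (hf : IsBddC1 f) (x : E) : IsBddC1 fun y => f (x + y) := by
  refine ⟨hf.contDiff.comp (contDiff_const.add contDiff_id), hf.bdd.imp fun _ hM y => hM _,
    hf.bdd_fderiv.imp fun _ hM y => ?_⟩
  rw [fderiv_comp_add_left]
  exact hM _

variable [MeasurableSpace E] [OpensMeasurableSpace E] [SecondCountableTopology E]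
  (ν : Measure E) [IsFiniteMeasure ν]

lemma fderiv_integral_comp_add (hf : IsBddC1 f) (x : E) :
    fderiv ℝ (fun x => ∫ y, f (x + y) ∂ν) x = ∫ y, fderiv ℝ f (x + y) ∂ν :=
  let ⟨_, hM⟩ := hf.bdd_fderiv
  (hasFDerivAt_integral_comp_add hf.contDiff
    (hf.isBddContinuous.comp_add_left x).integrable hM).fderiv

lemma integral_comp_add (hf : IsBddC1 f) : IsBddC1 fun x => ∫ y, f (x + y) ∂ν := by
  obtain ⟨M', hM'⟩ := hf.bdd_fderiv
  have hderiv := funext (hf.fderiv_integral_comp_add ν)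
  refine ⟨contDiff_one_iff_fderiv.2 ⟨fun x => ?_, ?_⟩, ?_, ?_⟩
  · exact (hasFDerivAt_integral_comp_add hf.contDiff
      (hf.isBddContinuous.comp_add_left x).integrable hM').differentiableAt
  · exact hderiv ▸ (hf.isBddContinuous_fderiv.integral_comp_add ν).continuous
  · simpa only [Real.norm_eq_abs] using (hf.isBddContinuous.integral_comp_add ν).bdd
  · exact hderiv ▸ (hf.isBddContinuous_fderiv.integral_comp_add ν).bdd

lemma sq_norm_fderiv_integral_comp_add_le [IsProbabilityMeasure ν] (hf : IsBddC1 f) (x : E) :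
    ‖fderiv ℝ (fun x => ∫ y, f (x + y) ∂ν) x‖ ^ 2 ≤ ∫ y, ‖fderiv ℝ f (x + y)‖ ^ 2 ∂ν := by
  rw [hf.fderiv_integral_comp_add ν]
  have hf' := hf.isBddContinuous_fderiv.comp_add_left x
  exact sq_norm_integral_le_integral_sq_norm hf'.integrable (hf'.norm.pow 2).integrable

end IsBddC1

end BddC1

theorem PoincareIneq.integral_comp_add_le {d : ℕ} {ν : Measure (EuclideanSpace ℝ (Fin d))}
    {C : ℝ} (hν : PoincareIneq ν C) {f : EuclideanSpace ℝ (Fin d) → ℝ} (hf : IsBddC1 f)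
    (x : EuclideanSpace ℝ (Fin d)) :
    ∫ y, f (x + y) ^ 2 ∂ν ≤
      C * ∫ y, ‖fderiv ℝ f (x + y)‖ ^ 2 ∂ν + (∫ y, f (x + y) ∂ν) ^ 2 := by
  have hfx := hf.comp_add_left x
  simpa only [fderiv_comp_add_left] using hν _ hfx.contDiff hfx.bdd hfx.bdd_fderiv

theorem poincare_conv_general (d : ℕ) (μ ν : Measure (EuclideanSpace ℝ (Fin d)))
    [IsProbabilityMeasure μ] [IsProbabilityMeasure ν]
    (C₁ C₂ : ℝ) (hC₁ : 0 < C₁)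
    (hμ : PoincareIneq μ C₁) (hν : PoincareIneq ν C₂) :
    PoincareIneq (conv μ ν) (C₁ + C₂) := by
  intro f hf_contDiff hf_bdd hf_bdd_fderiv
  have hf : IsBddC1 f := ⟨hf_contDiff, hf_bdd, hf_bdd_fderiv⟩
  set g := fun x => ∫ y, f (x + y) ∂ν
  set I := fun x => ∫ y, ‖fderiv ℝ f (x + y)‖ ^ 2 ∂ν
  have hg : IsBddC1 g := hf.integral_comp_add ν
  have hI : Integrable I μ :=
    ((hf.isBddContinuous_fderiv.norm.pow 2).integral_comp_add ν).integrable
  have hg2 : Integrable (fun x => g x ^ 2) μ := (hg.isBddContinuous.pow 2).integrable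
  rw [show conv μ ν = μ ∗ ν from rfl, integral_conv (hf.isBddContinuous.pow 2).integrable,
    integral_conv (hf.isBddContinuous_fderiv.norm.pow 2).integrable,
    integral_conv hf.isBddContinuous.integrable]
  calc ∫ x, ∫ y, f (x + y) ^ 2 ∂ν ∂μ ≤ ∫ x, (C₂ * I x + g x ^ 2) ∂μ :=
        integral_mono ((hf.isBddContinuous.pow 2).integral_comp_add ν).integrable
          ((hI.const_mul C₂).add hg2) (hν.integral_comp_add_le hf)
    _ = C₂ * ∫ x, I x ∂μ + ∫ x, g x ^ 2 ∂μ := by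
        rw [integral_add (hI.const_mul C₂) hg2, integral_const_mul]
    _ ≤ C₂ * ∫ x, I x ∂μ + (C₁ * ∫ x, ‖fderiv ℝ g x‖ ^ 2 ∂μ + (∫ x, g x ∂μ) ^ 2) := by
        gcongr
        exact hμ g hg.contDiff hg.bdd hg.bdd_fderiv
    _ ≤ C₂ * ∫ x, I x ∂μ + (C₁ * ∫ x, I x ∂μ + (∫ x, g x ∂μ) ^ 2) := by
        gcongr _ + (_ * ?_ + _)
        exact integral_mono (hg.isBddContinuous_fderiv.norm.pow 2).integrable hI
          (hf.sq_norm_fderiv_integral_comp_add_le ν)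
    _ = (C₁ + C₂) * ∫ x, I x ∂μ + (∫ x, g x ∂μ) ^ 2 := by ring

theorem poincare_conv (d : ℕ) (μ ν : Measure (EuclideanSpace ℝ (Fin d)))
    [IsProbabilityMeasure μ] [IsProbabilityMeasure ν]
    (C₁ C₂ : ℝ) (hC₁ : 0 < C₁) (hC₂ : 0 < C₂)
    (hμ : PoincareIneq μ C₁) (hν : PoincareIneq ν C₂) :
    PoincareIneq (conv μ ν) (C₁ + C₂) :=
  poincare_conv_general d μ ν C₁ C₂ hC₁ hμ hν
end

section
/- Let μ and ν be probability measures on ℝ^d satisfying the super Poincaré inequality with rate functions β₁ and β₂ respectively. Then μ*ν satisfies the super Poincaré inequality with β(r) := inf{β₁(r₁)β₂(r₂) : r₁, r₂ > 0, r₁ + r₂β₁(r₁) ≤ r}, i.e. (μ*ν)(f²) ≤ r (μ*ν)(|∇f|²) + β(r)((μ*ν)(|f|))² for all r > 0 and f ∈ C_b¹(ℝ^d). -/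
/-!
Write `(μ * ν)(g) = ∫ (∫ g (y + x) dμ(x)) dν(y)`. The inequality for `μ`, applied to each
translate `f (y + ·)` and integrated in `y`, bounds `(μ * ν)(f²)` by
`r₁ (μ * ν)(|∇f|²) + β₁(r₁) ν(h²)` with `h(y) = ∫ |f (y + x)| dμ(x)`. By Jensen,
`|∇h(y)|² ≤ ∫ |∇f (y + x)|² dμ(x)`, so the inequality for `ν` applied to `h` gives
`ν(h²) ≤ r₂ (μ * ν)(|∇f|²) + β₂(r₂) (μ * ν)(|f|)²`. As `h` is only Lipschitz, the inequality is
applied to the `C¹` majorants `y ↦ ∫ √(f (y + x)² + ε²) dμ(x)` and `ε → 0`. Optimising over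
`r₁, r₂` gives the rate `β`; the infimum is over a nonempty set because `β₁ ≥ 1` (test `f = 1`).
-/

open MeasureTheory Real

/-- A probability measure `m` on `ℝ^d` satisfies the super Poincaré inequality with rate `β`:
`m(f²) ≤ r·m(|∇f|²) + β(r)·m(|f|)²` for all `r > 0` and all bounded `C¹` functions `f`
with bounded gradient. -/
def SuperPoincareIneq {d : ℕ} (m : Measure (EuclideanSpace ℝ (Fin d))) (β : ℝ → ℝ) : Prop :=
  ∀ r : ℝ, 0 < r → ∀ f : EuclideanSpace ℝ (Fin d) → ℝ, ContDiff ℝ 1 f →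
    (∃ M, ∀ x, |f x| ≤ M) → (∃ M, ∀ x, ‖fderiv ℝ f x‖ ≤ M) →
    ∫ x, f x ^ 2 ∂m ≤ r * ∫ x, ‖fderiv ℝ f x‖ ^ 2 ∂m + β r * (∫ x, |f x| ∂m) ^ 2

open Filter Topology Pointwise

section SmoothAbs

variable {E : Type*} [NormedAddCommGroup E] [NormedSpace ℝ E] {f : E → ℝ} {ε : ℝ}

lemma Real.sqrt_sq_add_sq_le_abs_add (hε : 0 ≤ ε) (t : ℝ) : √(t ^ 2 + ε ^ 2) ≤ |t| + ε :=
  (Real.sqrt_le_left (by positivity)).2 (by nlinarith [sq_abs t, abs_nonneg t])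

lemma contDiff_sqrt_sq_add_sq (hf : ContDiff ℝ 1 f) (hε : 0 < ε) :
    ContDiff ℝ 1 fun x => √(f x ^ 2 + ε ^ 2) :=
  ((hf.pow 2).add contDiff_const).sqrt fun x => by positivity

lemma norm_fderiv_sqrt_sq_add_sq_le (hf : Differentiable ℝ f) (hε : 0 < ε) (x : E) :
    ‖fderiv ℝ (fun x => √(f x ^ 2 + ε ^ 2)) x‖ ≤ ‖fderiv ℝ f x‖ := by
  set s := √(f x ^ 2 + ε ^ 2)
  have hs : 0 < s := by positivity
  have hφ : HasDerivAt (fun t => √(t ^ 2 + ε ^ 2)) (f x / s) (f x) := by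
    convert (((hasDerivAt_pow 2 (f x)).add_const (ε ^ 2)).sqrt (by positivity)) using 1
    field_simp
    ring
  have hd : HasFDerivAt (fun x => √(f x ^ 2 + ε ^ 2)) ((f x / s) • fderiv ℝ f x) x :=
    hφ.comp_hasFDerivAt x (hf x).hasFDerivAt
  rw [hd.fderiv, norm_smul, Real.norm_eq_abs, abs_div, abs_of_pos hs]
  have : |f x| / s ≤ 1 := (div_le_one hs).2 (Real.abs_le_sqrt (by nlinarith))
  exact mul_le_of_le_one_left (norm_nonneg _) this

end SmoothAbs

section Bounded

variable {α : Type*} [MeasurableSpace α] {m : Measure α} {g : α → ℝ} {M : ℝ}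

lemma memLp_two_of_abs_le [IsFiniteMeasure m] (hg : AEStronglyMeasurable g m)
    (hM : ∀ x, |g x| ≤ M) : MemLp g 2 m :=
  (memLp_top_of_bound hg M (.of_forall hM)).mono_exponent le_top

lemma sq_integral_le_integral_sq [IsProbabilityMeasure m] (hg : MemLp g 2 m) :
    (∫ x, g x ∂m) ^ 2 ≤ ∫ x, g x ^ 2 ∂m := by
  have := ProbabilityTheory.variance_nonneg g m
  rw [ProbabilityTheory.variance_eq_sub hg] at this
  simpa [sub_nonneg] using this

end Bounded

section ShiftMean

noncomputable def shiftMean {E : Type*} [Add E] [MeasurableSpace E] (μ : Measure E) (g : E → ℝ)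
    (y : E) : ℝ :=
  ∫ x, g (y + x) ∂μ

variable {E : Type*} [NormedAddCommGroup E] [MeasurableSpace E] {μ : Measure E} {g h F : E → ℝ}
  {M M' : ℝ}

lemma abs_shiftMean_le [IsProbabilityMeasure μ] (hg : ∀ x, |g x| ≤ M) (y : E) :
    |shiftMean μ g y| ≤ M := by
  simpa [shiftMean] using norm_integral_le_of_norm_le_const (μ := μ) (f := fun x => g (y + x))
    (.of_forall fun x => hg (y + x))

variable [OpensMeasurableSpace E] [IsFiniteMeasure μ]

lemma integrable_comp_const_add_of_abs_le (hg : Continuous g) (hM : ∀ x, |g x| ≤ M) (y : E) :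
    Integrable (fun x => g (y + x)) μ :=
  .of_bound (hg.comp (continuous_const_add y)).aestronglyMeasurable M (.of_forall fun _ => hM _)

lemma shiftMean_mono (hg : ∀ x, 0 ≤ g x) (hh : Continuous h) (hM : ∀ x, |h x| ≤ M)
    (hgh : ∀ x, g x ≤ h x) (y : E) : shiftMean μ g y ≤ shiftMean μ h y :=
  integral_mono_of_nonneg (.of_forall fun _ => hg _)
    (integrable_comp_const_add_of_abs_le hh hM y) (.of_forall fun _ => hgh _)

lemma shiftMean_add_const [IsProbabilityMeasure μ] (hg : Continuous g) (hM : ∀ x, |g x| ≤ M)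
    (c : ℝ) (y : E) : shiftMean μ (fun z => g z + c) y = shiftMean μ g y + c := by
  simp [shiftMean, integral_add (integrable_comp_const_add_of_abs_le hg hM y) (integrable_const c)]

lemma sq_shiftMean_le [IsProbabilityMeasure μ] (hg : Continuous g) (hM : ∀ x, |g x| ≤ M)
    (y : E) : shiftMean μ g y ^ 2 ≤ shiftMean μ (fun z => g z ^ 2) y :=
  sq_integral_le_integral_sq
    (memLp_two_of_abs_le (hg.comp (continuous_const_add y)).aestronglyMeasurable fun _ => hM _)

variable [NormedSpace ℝ E] [SecondCountableTopology E]

lemma hasFDerivAt_shiftMean (hF : ContDiff ℝ 1 F) (hM : ∀ x, |F x| ≤ M)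
    (hM' : ∀ x, ‖fderiv ℝ F x‖ ≤ M') (y : E) :
    HasFDerivAt (shiftMean μ F) (∫ x, fderiv ℝ F (y + x) ∂μ) y := by
  have hdF : Continuous (fderiv ℝ F) := hF.continuous_fderiv one_ne_zero
  refine hasFDerivAt_integral_of_dominated_of_fderiv_le (bound := fun _ => M') Filter.univ_mem
    (.of_forall fun y => (hF.continuous.comp (continuous_const_add y)).aestronglyMeasurable)
    (integrable_comp_const_add_of_abs_le hF.continuous hM y)
    (hdF.comp (continuous_const_add y)).aestronglyMeasurable
    (.of_forall fun x y _ => hM' (y + x)) (integrable_const M')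
    (.of_forall fun x y _ => ?_)
  exact (hasFDerivAt_comp_add_right x).2 ((hF.differentiable one_ne_zero _).hasFDerivAt)

lemma contDiff_shiftMean (hF : ContDiff ℝ 1 F) (hM : ∀ x, |F x| ≤ M)
    (hM' : ∀ x, ‖fderiv ℝ F x‖ ≤ M') : ContDiff ℝ 1 (shiftMean μ F) := by
  have hderiv := hasFDerivAt_shiftMean (μ := μ) hF hM hM'
  refine contDiff_one_iff_fderiv.2 ⟨fun y => (hderiv y).differentiableAt, ?_⟩
  rw [funext fun y => (hderiv y).fderiv]
  have hdF : Continuous (fderiv ℝ F) := hF.continuous_fderiv one_ne_zero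
  exact continuous_of_dominated
    (fun y => (hdF.comp (continuous_const_add y)).aestronglyMeasurable)
    (fun y => .of_forall fun x => hM' (y + x)) (integrable_const M')
    (.of_forall fun x => hdF.comp (continuous_add_const x))

lemma norm_fderiv_shiftMean_le (hF : ContDiff ℝ 1 F) (hM : ∀ x, |F x| ≤ M)
    (hM' : ∀ x, ‖fderiv ℝ F x‖ ≤ M') (y : E) :
    ‖fderiv ℝ (shiftMean μ F) y‖ ≤ shiftMean μ (fun z => ‖fderiv ℝ F z‖) y := by
  rw [(hasFDerivAt_shiftMean hF hM hM' y).fderiv]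
  exact norm_integral_le_integral_norm _

end ShiftMean

section Conv

variable {M : Type*} [AddMonoid M] [MeasurableSpace M] [MeasurableAdd₂ M] {μ ν : Measure M}
  [SFinite μ] {g : M → ℝ}

lemma integral_conv_eq_integral_shiftMean [SFinite ν] (hg : Integrable g (ν ∗ μ)) :
    ∫ z, g z ∂(ν ∗ μ) = ∫ y, shiftMean μ g y ∂ν :=
  integral_conv hg

lemma integrable_shiftMean (hg : Integrable g (ν ∗ μ)) : Integrable (shiftMean μ g) ν :=
  ((integrable_map_measure hg.1 measurable_add.aemeasurable).1 hg).integral_prod_left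

end Conv

/-- `conv μ ν` is Mathlib's `μ ∗ ν` by definition; swapping the factors puts the `μ`-integral
inside in `integral_conv`. -/
lemma conv_eq_conv_swap {d : ℕ} (μ ν : Measure (EuclideanSpace ℝ (Fin d))) [SFinite μ]
    [SFinite ν] : conv μ ν = ν ∗ μ :=
  Measure.conv_comm μ ν

section Smoothing

variable {E : Type*} [NormedAddCommGroup E] [NormedSpace ℝ E] [MeasurableSpace E]
  [OpensMeasurableSpace E] [SecondCountableTopology E] {μ : Measure E} [IsProbabilityMeasure μ]
  {f : E → ℝ} {M M' ε : ℝ}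

lemma exists_contDiff_approx_shiftMean_abs (hf : ContDiff ℝ 1 f) (hM : ∀ x, |f x| ≤ M)
    (hM' : ∀ x, ‖fderiv ℝ f x‖ ≤ M') (hε : 0 < ε) :
    ∃ u : E → ℝ, ContDiff ℝ 1 u ∧ (∃ C, ∀ y, ‖fderiv ℝ u y‖ ≤ C) ∧
      (∀ y, shiftMean μ (fun z => |f z|) y ≤ u y ∧ u y ≤ shiftMean μ (fun z => |f z|) y + ε) ∧
      ∀ y, ‖fderiv ℝ u y‖ ^ 2 ≤ shiftMean μ (fun z => ‖fderiv ℝ f z‖ ^ 2) y := by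
  set φ : E → ℝ := fun z => √(f z ^ 2 + ε ^ 2)
  have hφ : ContDiff ℝ 1 φ := contDiff_sqrt_sq_add_sq hf hε
  have hφM : ∀ z, |φ z| ≤ M + ε := fun z => by
    rw [abs_of_nonneg (Real.sqrt_nonneg _)]
    linarith [Real.sqrt_sq_add_sq_le_abs_add hε.le (f z), hM z]
  have hdφ : ∀ z, ‖fderiv ℝ φ z‖ ≤ ‖fderiv ℝ f z‖ :=
    norm_fderiv_sqrt_sq_add_sq_le (hf.differentiable one_ne_zero) hε
  have hdφM' : ∀ z, ‖fderiv ℝ φ z‖ ≤ M' := fun z => (hdφ z).trans (hM' z)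
  have hdf : Continuous fun z => ‖fderiv ℝ f z‖ := (hf.continuous_fderiv one_ne_zero).norm
  have hdfM' : ∀ z, |‖fderiv ℝ f z‖| ≤ M' := fun z => (abs_norm _).trans_le (hM' z)
  have hgrad : ∀ y, ‖fderiv ℝ (shiftMean μ φ) y‖ ≤ shiftMean μ (fun z => ‖fderiv ℝ f z‖) y :=
    fun y => (norm_fderiv_shiftMean_le hφ hφM hdφM' y).trans
      (shiftMean_mono (fun _ => norm_nonneg _) hdf hdfM' hdφ y)
  refine ⟨shiftMean μ φ, contDiff_shiftMean hφ hφM hdφM',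
    ⟨M', fun y => (hgrad y).trans ((le_abs_self _).trans (abs_shiftMean_le hdfM' y))⟩,
    fun y => ⟨?_, ?_⟩, fun y => ?_⟩
  · exact shiftMean_mono (fun _ => abs_nonneg _) hφ.continuous hφM
      (fun z => Real.abs_le_sqrt (by nlinarith)) y
  · rw [← shiftMean_add_const hf.continuous.abs (fun z => (abs_abs (f z)).trans_le (hM z))]
    exact shiftMean_mono (h := fun z => |f z| + ε) (M := M + ε) (fun _ => Real.sqrt_nonneg _)
      (hf.continuous.abs.add continuous_const)
      (fun z => by rw [abs_of_nonneg (by positivity)]; linarith [hM z])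
      (fun z => Real.sqrt_sq_add_sq_le_abs_add hε.le (f z)) y
  · calc ‖fderiv ℝ (shiftMean μ φ) y‖ ^ 2
        ≤ shiftMean μ (fun z => ‖fderiv ℝ f z‖) y ^ 2 := by gcongr; exact hgrad y
      _ ≤ shiftMean μ (fun z => ‖fderiv ℝ f z‖ ^ 2) y := sq_shiftMean_le hdf hdfM' y

end Smoothing

namespace SuperPoincareIneq

variable {d : ℕ} {m μ ν : Measure (EuclideanSpace ℝ (Fin d))} {β β₁ β₂ : ℝ → ℝ}
  {r r₁ r₂ M M' : ℝ} {f : EuclideanSpace ℝ (Fin d) → ℝ}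

lemma one_le [IsProbabilityMeasure m] (h : SuperPoincareIneq m β) (hr : 0 < r) : 1 ≤ β r := by
  simpa using h r hr (fun _ => 1) contDiff_const ⟨1, by simp⟩ ⟨0, by simp⟩

lemma shiftMean_sq_le (h : SuperPoincareIneq μ β) (hr : 0 < r) (hf : ContDiff ℝ 1 f)
    (hM : ∀ x, |f x| ≤ M) (hM' : ∀ x, ‖fderiv ℝ f x‖ ≤ M') (y : EuclideanSpace ℝ (Fin d)) :
    shiftMean μ (fun z => f z ^ 2) y ≤ r * shiftMean μ (fun z => ‖fderiv ℝ f z‖ ^ 2) y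
      + β r * shiftMean μ (fun z => |f z|) y ^ 2 := by
  have := h r hr (fun x => f (y + x)) (hf.comp (contDiff_const.add contDiff_id))
    ⟨M, fun _ => hM _⟩ ⟨M', fun x => by rw [fderiv_comp_add_left]; exact hM' _⟩
  simpa only [fderiv_comp_add_left, shiftMean] using this

lemma integral_sq_le_of_approx [IsProbabilityMeasure ν] (h : SuperPoincareIneq ν β) (hr : 0 < r)
    {g G : EuclideanSpace ℝ (Fin d) → ℝ} (hg : AEStronglyMeasurable g ν) (hg0 : ∀ y, 0 ≤ g y)
    (hgM : ∀ y, g y ≤ M) (hG : Integrable G ν)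
    (happrox : ∀ ε > 0, ∃ u : EuclideanSpace ℝ (Fin d) → ℝ, ContDiff ℝ 1 u ∧
      (∃ C, ∀ y, ‖fderiv ℝ u y‖ ≤ C) ∧ (∀ y, g y ≤ u y ∧ u y ≤ g y + ε) ∧
      ∀ y, ‖fderiv ℝ u y‖ ^ 2 ≤ G y) :
    ∫ y, g y ^ 2 ∂ν ≤ r * ∫ y, G y ∂ν + β r * (∫ y, g y ∂ν) ^ 2 := by
  have hβ : 0 ≤ β r := zero_le_one.trans (h.one_le hr)
  have hgabs : ∀ y, |g y| ≤ M := fun y => (abs_of_nonneg (hg0 y)).trans_le (hgM y)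
  have hg_int : Integrable g ν := .of_bound hg M (.of_forall hgabs)
  have hbound : ∀ ε > 0,
      ∫ y, g y ^ 2 ∂ν ≤ r * ∫ y, G y ∂ν + β r * (∫ y, g y ∂ν + ε) ^ 2 := by
    intro ε hε
    obtain ⟨u, hu, hdu, hgu, hduG⟩ := happrox ε hε
    have hu0 : ∀ y, 0 ≤ u y := fun y => (hg0 y).trans (hgu y).1
    have huM : ∀ y, |u y| ≤ M + ε := fun y => by
      rw [abs_of_nonneg (hu0 y)]; linarith [(hgu y).2, hgM y]
    have hu_int : Integrable u ν :=
      .of_bound hu.continuous.aestronglyMeasurable _ (.of_forall huM)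
    have hdu_int : Integrable (fun y => ‖fderiv ℝ u y‖ ^ 2) ν := by
      obtain ⟨C, hC⟩ := hdu
      exact (memLp_two_of_abs_le (hu.continuous_fderiv one_ne_zero).norm.aestronglyMeasurable
        fun y => (abs_norm _).trans_le (hC y)).integrable_sq
    have hsq : ∫ y, g y ^ 2 ∂ν ≤ ∫ y, u y ^ 2 ∂ν :=
      integral_mono (memLp_two_of_abs_le hg hgabs).integrable_sq
        (memLp_two_of_abs_le hu.continuous.aestronglyMeasurable huM).integrable_sq
        fun y => pow_le_pow_left₀ (hg0 y) (hgu y).1 2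
    have hgrad : ∫ y, ‖fderiv ℝ u y‖ ^ 2 ∂ν ≤ ∫ y, G y ∂ν := integral_mono hdu_int hG hduG
    have hmean : ∫ y, |u y| ∂ν ≤ ∫ y, g y ∂ν + ε := by
      simp_rw [abs_of_nonneg (hu0 _)]
      simpa [integral_add hg_int (integrable_const ε)] using
        integral_mono hu_int (hg_int.add (integrable_const ε)) fun y => (hgu y).2
    calc ∫ y, g y ^ 2 ∂ν ≤ ∫ y, u y ^ 2 ∂ν := hsq
      _ ≤ r * ∫ y, ‖fderiv ℝ u y‖ ^ 2 ∂ν + β r * (∫ y, |u y| ∂ν) ^ 2 :=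
        h r hr u hu ⟨M + ε, huM⟩ hdu
      _ ≤ r * ∫ y, G y ∂ν + β r * (∫ y, g y ∂ν + ε) ^ 2 := by gcongr
  have hlim : Tendsto (fun ε => r * ∫ y, G y ∂ν + β r * (∫ y, g y ∂ν + ε) ^ 2) (𝓝[>] 0)
      (𝓝 (r * ∫ y, G y ∂ν + β r * (∫ y, g y ∂ν) ^ 2)) :=
    ((by fun_prop : Continuous _).tendsto' 0 _ (by simp)).mono_left nhdsWithin_le_nhds
  exact ge_of_tendsto hlim (eventually_nhdsWithin_of_forall fun ε (hε : 0 < ε) => hbound ε hε)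

lemma conv_le [IsProbabilityMeasure μ] [IsProbabilityMeasure ν] (hμ : SuperPoincareIneq μ β₁)
    (hν : SuperPoincareIneq ν β₂) (hr₁ : 0 < r₁) (hr₂ : 0 < r₂) (hf : ContDiff ℝ 1 f)
    (hM : ∀ x, |f x| ≤ M) (hM' : ∀ x, ‖fderiv ℝ f x‖ ≤ M') :
    ∫ z, f z ^ 2 ∂conv μ ν ≤ (r₁ + r₂ * β₁ r₁) * ∫ z, ‖fderiv ℝ f z‖ ^ 2 ∂conv μ ν
      + β₁ r₁ * β₂ r₂ * (∫ z, |f z| ∂conv μ ν) ^ 2 := by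
  rw [conv_eq_conv_swap]
  have hsq : Integrable (fun z => f z ^ 2) (ν ∗ μ) :=
    (memLp_two_of_abs_le hf.continuous.aestronglyMeasurable hM).integrable_sq
  have hgrad : Integrable (fun z => ‖fderiv ℝ f z‖ ^ 2) (ν ∗ μ) :=
    (memLp_two_of_abs_le (hf.continuous_fderiv one_ne_zero).norm.aestronglyMeasurable
      fun z => (abs_norm _).trans_le (hM' z)).integrable_sq
  have habs : Integrable (fun z => |f z|) (ν ∗ μ) :=
    .of_bound hf.continuous.abs.aestronglyMeasurable M
      (.of_forall fun z => (abs_abs (f z)).trans_le (hM z))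
  rw [integral_conv_eq_integral_shiftMean hsq, integral_conv_eq_integral_shiftMean hgrad,
    integral_conv_eq_integral_shiftMean habs]
  set h₀ := shiftMean μ fun z => |f z|
  set D := shiftMean μ fun z => ‖fderiv ℝ f z‖ ^ 2
  have hh₀M : ∀ y, |h₀ y| ≤ M := abs_shiftMean_le fun z => (abs_abs (f z)).trans_le (hM z)
  have hh₀_sq : Integrable (fun y => h₀ y ^ 2) ν :=
    (memLp_two_of_abs_le (integrable_shiftMean habs).aestronglyMeasurable hh₀M).integrable_sq
  have hD : Integrable D ν := integrable_shiftMean hgrad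
  have hfibre : ∫ y, shiftMean μ (fun z => f z ^ 2) y ∂ν
      ≤ r₁ * ∫ y, D y ∂ν + β₁ r₁ * ∫ y, h₀ y ^ 2 ∂ν := by
    rw [← integral_const_mul, ← integral_const_mul, ← integral_add (hD.const_mul _)
      (hh₀_sq.const_mul _)]
    exact integral_mono (integrable_shiftMean hsq) ((hD.const_mul _).add (hh₀_sq.const_mul _))
      (hμ.shiftMean_sq_le hr₁ hf hM hM')
  have hbase : ∫ y, h₀ y ^ 2 ∂ν ≤ r₂ * ∫ y, D y ∂ν + β₂ r₂ * (∫ y, h₀ y ∂ν) ^ 2 :=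
    hν.integral_sq_le_of_approx hr₂ (integrable_shiftMean habs).aestronglyMeasurable
      (fun y => integral_nonneg fun _ => abs_nonneg _) (fun y => (le_abs_self _).trans (hh₀M y))
      hD (fun ε hε => exists_contDiff_approx_shiftMean_abs hf hM hM' hε)
  have hβ₁ : 0 ≤ β₁ r₁ := zero_le_one.trans (hμ.one_le hr₁)
  calc ∫ y, shiftMean μ (fun z => f z ^ 2) y ∂ν
      ≤ r₁ * ∫ y, D y ∂ν + β₁ r₁ * (r₂ * ∫ y, D y ∂ν + β₂ r₂ * (∫ y, h₀ y ∂ν) ^ 2) := by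
        grw [hfibre, hbase]
    _ = (r₁ + r₂ * β₁ r₁) * ∫ y, D y ∂ν + β₁ r₁ * β₂ r₂ * (∫ y, h₀ y ∂ν) ^ 2 := by ring

end SuperPoincareIneq

theorem superPoincare_conv_general (d : ℕ) (μ ν : Measure (EuclideanSpace ℝ (Fin d)))
    [IsProbabilityMeasure μ] [IsProbabilityMeasure ν]
    (β₁ β₂ : ℝ → ℝ)
    (hμ : SuperPoincareIneq μ β₁) (hν : SuperPoincareIneq ν β₂) :
    SuperPoincareIneq (conv μ ν)
      (fun r => sInf {b : ℝ | ∃ r₁ r₂ : ℝ, 0 < r₁ ∧ 0 < r₂ ∧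
        r₁ + r₂ * β₁ r₁ ≤ r ∧ b = β₁ r₁ * β₂ r₂}) := by
  rintro r hr f hf ⟨M, hM⟩ ⟨M', hM'⟩
  beta_reduce
  set S := {b : ℝ | ∃ r₁ r₂ : ℝ, 0 < r₁ ∧ 0 < r₂ ∧ r₁ + r₂ * β₁ r₁ ≤ r ∧ b = β₁ r₁ * β₂ r₂}
  set I := (∫ z, |f z| ∂conv μ ν) ^ 2
  have hS : S.Nonempty := by
    have hβ : 0 < β₁ (r / 2) := zero_lt_one.trans_le (hμ.one_le (half_pos hr))
    exact ⟨_, r / 2, r / (2 * β₁ (r / 2)), half_pos hr, by positivity, by field_simp; linarith,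
      rfl⟩
  have hbound : ∀ b ∈ I • S,
      ∫ z, f z ^ 2 ∂conv μ ν - r * ∫ z, ‖fderiv ℝ f z‖ ^ 2 ∂conv μ ν ≤ b := by
    rintro _ ⟨_, ⟨r₁, r₂, hr₁, hr₂, hle, rfl⟩, rfl⟩
    have hgrad : 0 ≤ ∫ z, ‖fderiv ℝ f z‖ ^ 2 ∂conv μ ν := integral_nonneg fun _ => by positivity
    have hconv := hμ.conv_le hν hr₁ hr₂ hf hM hM'
    have hrate := mul_le_mul_of_nonneg_right hle hgrad
    simp only [smul_eq_mul]
    linarith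
  have hinf := le_csInf hS.smul_set hbound
  rw [Real.sInf_smul_of_nonneg (by positivity), smul_eq_mul] at hinf
  linarith

theorem superPoincare_conv (d : ℕ) (μ ν : Measure (EuclideanSpace ℝ (Fin d)))
    [IsProbabilityMeasure μ] [IsProbabilityMeasure ν]
    (β₁ β₂ : ℝ → ℝ) (hβ₁ : ∀ r, 0 < r → 0 < β₁ r) (hβ₂ : ∀ r, 0 < r → 0 < β₂ r)
    (hμ : SuperPoincareIneq μ β₁) (hν : SuperPoincareIneq ν β₂) :
    SuperPoincareIneq (conv μ ν)
      (fun r => sInf {b : ℝ | ∃ r₁ r₂ : ℝ, 0 < r₁ ∧ 0 < r₂ ∧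
        r₁ + r₂ * β₁ r₁ ≤ r ∧ b = β₁ r₁ * β₂ r₂}) :=
  superPoincare_conv_general d μ ν β₁ β₂ hμ hν
end
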